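/- Weighted sums of dilated symbols: Let A be an automorphism of G with adjoint A*, let m ∈ BM_θ[(p₁'; (p₂'; (p₃'], and let 1/q = 1/p₁' + 1/p₂' − 1/p₃'. If Ψ : Ĝ → ℂ satisfies Σ_{u∈Ĝ} |A*|^{−1/q} |Ψ(u)| < ∞ (i.e., Ψ ∈ ℓ¹(Ĝ, |A*|^{−1/q} dμ)), then m_Ψ(s,t) = Σ_{u ∈ A*Ĝ} m(A*s, A*t) Ψ(u) belongs to BM_θ[(p₁'; (p₂'; (p₃'], and ‖m_Ψ‖_{[(p₁';(p₂';(p₃']_θ} ≤ ‖Ψ‖_{ℓ¹(Ĝ, |A*|^{−1/q} dμ)} ‖m‖_{[(p₁';(p₂';(p₃']_θ}. -/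

import Mathlib

/- Setting: `G` is a compact abelian metric group with a finite Haar measure `μ`;
its dual group `Γ = Ĝ` is a countable discrete abelian group, paired with `G`
via the family of characters `χ : Γ → G → ℂ`, `χ s x = ⟨s, x⟩`. -/

open MeasureTheory ENNReal Filter

noncomputable section

variable {G : Type*} [MetricSpace G] [AddCommGroup G] [IsTopologicalAddGroup G]
  [CompactSpace G] [MeasurableSpace G] [BorelSpace G]
variable {Γ : Type*} [AddCommGroup Γ] [Countable Γ]

/-- The conjugate exponent `r' = r / (r - 1)`. -/
def conjExp (r : ℝ) : ℝ := r / (r - 1)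

/-- `χ` is a (separately multiplicative, unimodular, continuous) family of characters
pairing the dual group `Γ` with `G`. -/
def IsCharFamily (χ : Γ → G → ℂ) : Prop :=
  (∀ s t x, χ (s + t) x = χ s x * χ t x) ∧
  (∀ (s : Γ) (x y : G), χ s (x + y) = χ s x * χ s y) ∧
  (∀ (s : Γ) (x : G), ‖χ s x‖ = 1) ∧
  (∀ s : Γ, Continuous (χ s))

/-- One piece of the small Lebesgue norm:
`inf_{0<ε<p-1} ε^{-θ/(p-ε)} ‖h‖_{(p-ε)'}`. -/
def pieceNorm (μ : Measure G) (p θ : ℝ) (h : G → ℂ) : ℝ≥0∞ :=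
  ⨅ ε : {ε : ℝ // 0 < ε ∧ ε < p - 1},
    ENNReal.ofReal ((ε.1) ^ (-(θ / (p - ε.1)))) *
      (∫⁻ x, (‖h x‖₊ : ℝ≥0∞) ^ conjExp (p - ε.1) ∂μ) ^ (1 / conjExp (p - ε.1))

/-- The small Lebesgue norm `‖g‖_{(p',θ}`: infimum over all decompositions
`g = Σ_k g_k` of `Σ_k inf_{0<ε<p-1} ε^{-θ/(p-ε)} ‖g_k‖_{(p-ε)'}`. -/
def smallNorm (μ : Measure G) (p θ : ℝ) (g : G → ℂ) : ℝ≥0∞ :=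
  ⨅ gk : {gk : ℕ → G → ℂ // ∀ x, HasSum (fun k => gk k x) (g x)},
    ∑' k : ℕ, pieceNorm μ p θ (gk.1 k)

/-- `g` belongs to the small Lebesgue space `L^{(p',θ}(G)`. -/
def MemSmall (μ : Measure G) (p θ : ℝ) (g : G → ℂ) : Prop :=
  Measurable g ∧ smallNorm μ p θ g < ⊤

/-- The grand Lebesgue norm `‖f‖_{p),θ} = sup_{0<ε≤p-1} ε^{θ/(p-ε)} ‖f‖_{p-ε}`. -/
def grandNorm (μ : Measure G) (p θ : ℝ) (f : G → ℂ) : ℝ≥0∞ :=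
  ⨆ ε : {ε : ℝ // 0 < ε ∧ ε ≤ p - 1},
    ENNReal.ofReal ((ε.1) ^ (θ / (p - ε.1))) *
      (∫⁻ x, (‖f x‖₊ : ℝ≥0∞) ^ (p - ε.1) ∂μ) ^ (1 / (p - ε.1))

/-- The Fourier transform `f̂(γ) = ∫_G f(x) ⟨γ, -x⟩ dμ(x)`. -/
def fourierT (μ : Measure G) (χ : Γ → G → ℂ) (f : G → ℂ) (γ : Γ) : ℂ :=
  ∫ x, f x * χ γ (-x) ∂μ

/-- The bilinear operator `B_m(f,g)(x) = Σ_s Σ_t f̂(s) ĝ(t) m(s,t) ⟨s+t, x⟩`. -/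
def Bop (μ : Measure G) (χ : Γ → G → ℂ) (m : Γ → Γ → ℂ) (f g : G → ℂ) (x : G) : ℂ :=
  ∑' s : Γ, ∑' t : Γ, fourierT μ χ f s * fourierT μ χ g t * m s t * χ (s + t) x

/-- `m ∈ BM_θ[(p₁'; (p₂'; (p₃']`: there is `C > 0` with
`‖B_m(f,g)‖_{(p₃',θ} ≤ C ‖f‖_{(p₁',θ} ‖g‖_{(p₂',θ}` for all smooth `f, g`. -/
def BMclass (μ : Measure G) (χ : Γ → G → ℂ) (p₁ p₂ p₃ θ : ℝ) (m : Γ → Γ → ℂ) : Prop :=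
  ∃ C : ℝ, 0 < C ∧ ∀ f g : G → ℂ, Continuous f → Continuous g →
    smallNorm μ p₃ θ (Bop μ χ m f g) ≤
      ENNReal.ofReal C * (smallNorm μ p₁ θ f * smallNorm μ p₂ θ g)

/-- The bilinear multiplier norm `‖m‖_{[(p₁';(p₂';(p₃']_θ} = ‖B_m‖`. -/
def BMnorm (μ : Measure G) (χ : Γ → G → ℂ) (p₁ p₂ p₃ θ : ℝ) (m : Γ → Γ → ℂ) : ℝ≥0∞ :=
  ⨆ (f : G → ℂ) (g : G → ℂ) (_ : Continuous f) (_ : Continuous g)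
    (_ : smallNorm μ p₁ θ f ≤ 1) (_ : smallNorm μ p₂ θ g ≤ 1),
    smallNorm μ p₃ θ (Bop μ χ m f g)

/-! On a compact group the Haar measure of the whole group is finite and nonzero, so
`μ(A G) = |A| μ(G)` forces `|A| = 1`: the automorphism `A` preserves `μ`, the weight
`|A*|^{-1/q}` is `1`, and, `A*` being onto, `m_Ψ(s,t) = m(A*s, A*t) · Σ_u Ψ(u)`.
Reindexing the Fourier series by `A*` gives `B_m(f ∘ A, g ∘ A) = B_{m ∘ A*}(f, g) ∘ A`, and small
Lebesgue norms are invariant under measure-preserving maps, so `m ∘ A*` obeys every bound that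
`m` does; multiplying the symbol by the constant `Σ_u Ψ(u)` scales the operator by it. -/

section SmallNorm

variable {α β : Type*} [MeasurableSpace α] [MeasurableSpace β] {μ : Measure α} {ν : Measure β}
  {p θ : ℝ}

theorem pieceNorm_comp (e : α ≃ᵐ β) (he : MeasurePreserving e μ ν) (h : β → ℂ) :
    pieceNorm μ p θ (h ∘ e) = pieceNorm ν p θ h := by
  unfold pieceNorm
  congr! 4 with ε
  exact he.lintegral_comp_emb e.measurableEmbedding fun y => (‖h y‖₊ : ℝ≥0∞) ^ conjExp (p - ε.1)

theorem smallNorm_comp_le (e : α ≃ᵐ β) (he : MeasurePreserving e μ ν) (g : β → ℂ) :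
    smallNorm μ p θ (g ∘ e) ≤ smallNorm ν p θ g :=
  le_iInf fun gk => iInf_le_of_le ⟨fun k => gk.1 k ∘ e, fun x => gk.2 (e x)⟩ <|
    (tsum_congr fun k => pieceNorm_comp e he (gk.1 k)).le

theorem smallNorm_comp (e : α ≃ᵐ β) (he : MeasurePreserving e μ ν) (g : β → ℂ) :
    smallNorm μ p θ (g ∘ e) = smallNorm ν p θ g := by
  refine (smallNorm_comp_le e he g).antisymm ?_
  simpa [Function.comp_def] using smallNorm_comp_le e.symm (he.symm e) (g ∘ e)

theorem pieceNorm_const_mul (hp : 1 < p) (c : ℂ) (h : α → ℂ) :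
    pieceNorm μ p θ (fun x => c * h x) = ‖c‖ₑ * pieceNorm μ p θ h := by
  have : Nonempty {ε : ℝ // 0 < ε ∧ ε < p - 1} := ⟨⟨(p - 1) / 2, by constructor <;> linarith⟩⟩
  unfold pieceNorm
  rw [ENNReal.mul_iInf fun h => absurd h enorm_ne_top]
  refine iInf_congr fun ε => ?_
  have hr : 0 < conjExp (p - ε.1) := div_pos (by linarith [ε.2.2]) (by linarith [ε.2.2])
  set r := conjExp (p - ε.1)
  have hint : ∫⁻ x, (‖c * h x‖₊ : ℝ≥0∞) ^ r ∂μ = ‖c‖ₑ ^ r * ∫⁻ x, (‖h x‖₊ : ℝ≥0∞) ^ r ∂μ := by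
    rw [← lintegral_const_mul' _ _ (ENNReal.rpow_ne_top_of_nonneg hr.le enorm_ne_top)]
    refine lintegral_congr fun x => ?_
    rw [nnnorm_mul, coe_mul, ENNReal.mul_rpow_of_nonneg _ _ hr.le, enorm_eq_nnnorm]
  rw [hint, ENNReal.mul_rpow_of_nonneg _ _ (by positivity : (0 : ℝ) ≤ 1 / r), ← ENNReal.rpow_mul,
    mul_one_div_cancel hr.ne', ENNReal.rpow_one]
  ring

theorem smallNorm_const_mul_le (hp : 1 < p) (c : ℂ) (g : α → ℂ) :
    smallNorm μ p θ (fun x => c * g x) ≤ ‖c‖ₑ * smallNorm μ p θ g := by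
  have : Nonempty {gk : ℕ → α → ℂ // ∀ x, HasSum (fun k => gk k x) (g x)} :=
    ⟨⟨fun k x => if k = 0 then g x else 0, fun x => hasSum_ite_eq 0 (g x)⟩⟩
  unfold smallNorm
  rw [ENNReal.mul_iInf fun h => absurd h enorm_ne_top]
  refine le_iInf fun gk => iInf_le_of_le ⟨fun k x => c * gk.1 k x, fun x => (gk.2 x).mul_left c⟩ ?_
  simp only [pieceNorm_const_mul hp, ENNReal.tsum_mul_left, le_rfl]

end SmallNorm

section Measure

variable {α : Type*} [MeasurableSpace α] {μ : Measure α}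

theorem MeasurableEquiv.measurePreserving_of_measure_image (e : α ≃ᵐ α)
    (he : ∀ U, MeasurableSet U → μ (e '' U) = μ U) : MeasurePreserving e μ μ := by
  have hsymm : MeasurePreserving e.symm μ μ := by
    refine ⟨e.symm.measurable, Measure.ext fun U hU => ?_⟩
    rw [e.symm.map_apply, ← e.image_eq_preimage_symm, he U hU]
  simpa using hsymm.symm e.symm

theorem eq_one_of_measure_image_eq_mul [IsFiniteMeasure μ] [NeZero μ] {e : α → α}
    (he : Function.Surjective e) {c : ℝ}
    (hc : ∀ U, MeasurableSet U → μ (e '' U) = ENNReal.ofReal c * μ U) : c = 1 := by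
  have h := hc Set.univ MeasurableSet.univ
  rw [Set.image_univ, he.range_eq] at h
  exact ENNReal.ofReal_eq_one.mp
    ((ENNReal.mul_eq_right (NeZero.ne _) (measure_ne_top μ _)).mp h.symm)

end Measure

section BilinearOperator

variable {K : Type*} [AddCommGroup K] [MeasurableSpace K] {Λ : Type*} {μ : Measure K}
  {χ : Λ → K → ℂ}

theorem Bop_mul_const [AddCommGroup Λ] (m : Λ → Λ → ℂ) (c : ℂ) (f g : K → ℂ) :
    Bop μ χ (fun s t => m s t * c) f g = fun x => c * Bop μ χ m f g x := by
  funext x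
  unfold Bop
  rw [← tsum_mul_left]
  refine tsum_congr fun s => ?_
  rw [← tsum_mul_left]
  exact tsum_congr fun t => by ring

variable [TopologicalSpace K] [BorelSpace K] {A : K ≃ₜ+ K}

theorem smallNorm_comp_continuousAddEquiv (hA : MeasurePreserving A μ μ) (p θ : ℝ) (f : K → ℂ) :
    smallNorm μ p θ (f ∘ A) = smallNorm μ p θ f :=
  smallNorm_comp A.toHomeomorph.toMeasurableEquiv hA f

theorem fourierT_comp_apply_adjoint (hA : MeasurePreserving A μ μ) {Astar : Λ → Λ}
    (hAdj : ∀ x s, χ s (A x) = χ (Astar s) x) (f : K → ℂ) (s : Λ) :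
    fourierT μ χ (f ∘ A) (Astar s) = fourierT μ χ f s := by
  unfold fourierT
  simp_rw [Function.comp_apply, ← hAdj, map_neg]
  exact hA.integral_comp A.toHomeomorph.measurableEmbedding fun y => f y * χ s (-y)

variable [AddCommGroup Λ]

theorem Bop_comp (hA : MeasurePreserving A μ μ) {Astar : Λ ≃+ Λ}
    (hAdj : ∀ x s, χ s (A x) = χ (Astar s) x) (m : Λ → Λ → ℂ) (f g : K → ℂ) :
    Bop μ χ m (f ∘ A) (g ∘ A) = Bop μ χ (fun s t => m (Astar s) (Astar t)) f g ∘ A := by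
  funext x
  unfold Bop
  rw [← Astar.toEquiv.tsum_eq]
  refine tsum_congr fun s => ?_
  rw [← Astar.toEquiv.tsum_eq]
  refine tsum_congr fun t => ?_
  simp only [AddEquiv.toEquiv_eq_coe, EquivLike.coe_coe, ← map_add, ← hAdj,
    fourierT_comp_apply_adjoint hA hAdj]

theorem smallNorm_Bop_comp_adjoint (hA : MeasurePreserving A μ μ) {Astar : Λ ≃+ Λ}
    (hAdj : ∀ x s, χ s (A x) = χ (Astar s) x) (p θ : ℝ) (m : Λ → Λ → ℂ) (f g : K → ℂ) :
    smallNorm μ p θ (Bop μ χ (fun s t => m (Astar s) (Astar t)) f g) =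
      smallNorm μ p θ (Bop μ χ m (f ∘ A) (g ∘ A)) := by
  rw [Bop_comp hA hAdj, smallNorm_comp_continuousAddEquiv hA]

end BilinearOperator

section Multiplier

variable {K : Type*} [MetricSpace K] [AddCommGroup K] [MeasurableSpace K]
  {Λ : Type*} [AddCommGroup Λ] {μ : Measure K} {χ : Λ → K → ℂ} {p₁ p₂ p₃ θ : ℝ}
  {m : Λ → Λ → ℂ}

theorem BMclass.mul_const (hm : BMclass μ χ p₁ p₂ p₃ θ m) (hp₃ : 1 < p₃) (c : ℂ) :
    BMclass μ χ p₁ p₂ p₃ θ (fun s t => m s t * c) := by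
  obtain ⟨C, hC, hbd⟩ := hm
  refine ⟨(‖c‖ + 1) * C, by positivity, fun f g hf hg => ?_⟩
  calc smallNorm μ p₃ θ (Bop μ χ (fun s t => m s t * c) f g)
      ≤ ‖c‖ₑ * smallNorm μ p₃ θ (Bop μ χ m f g) := by
        rw [Bop_mul_const]; exact smallNorm_const_mul_le hp₃ c _
    _ ≤ ENNReal.ofReal (‖c‖ + 1) *
          (ENNReal.ofReal C * (smallNorm μ p₁ θ f * smallNorm μ p₂ θ g)) := by
        gcongr
        · rw [← ofReal_norm]; exact ENNReal.ofReal_le_ofReal (by linarith)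
        · exact hbd f g hf hg
    _ = ENNReal.ofReal ((‖c‖ + 1) * C) * (smallNorm μ p₁ θ f * smallNorm μ p₂ θ g) := by
        rw [ENNReal.ofReal_mul (by positivity), mul_assoc]

theorem BMnorm_mul_const_le (hp₃ : 1 < p₃) (c : ℂ) :
    BMnorm μ χ p₁ p₂ p₃ θ (fun s t => m s t * c) ≤ ‖c‖ₑ * BMnorm μ χ p₁ p₂ p₃ θ m := by
  refine iSup₂_le fun f g => iSup₂_le fun hf hg => iSup₂_le fun hf1 hg1 => ?_
  rw [Bop_mul_const]
  refine (smallNorm_const_mul_le hp₃ c _).trans ?_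
  gcongr
  exact le_iSup₂_of_le f g <| le_iSup₂_of_le hf hg <| le_iSup₂_of_le hf1 hg1 le_rfl

variable [BorelSpace K] {A : K ≃ₜ+ K} {Astar : Λ ≃+ Λ}

theorem BMclass.comp_adjoint (hm : BMclass μ χ p₁ p₂ p₃ θ m) (hA : MeasurePreserving A μ μ)
    (hAdj : ∀ x s, χ s (A x) = χ (Astar s) x) :
    BMclass μ χ p₁ p₂ p₃ θ (fun s t => m (Astar s) (Astar t)) := by
  obtain ⟨C, hC, hbd⟩ := hm
  refine ⟨C, hC, fun f g hf hg => ?_⟩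
  rw [smallNorm_Bop_comp_adjoint hA hAdj, ← smallNorm_comp_continuousAddEquiv hA p₁ θ f,
    ← smallNorm_comp_continuousAddEquiv hA p₂ θ g]
  exact hbd _ _ (hf.comp A.continuous) (hg.comp A.continuous)

theorem BMnorm_comp_adjoint_le (hA : MeasurePreserving A μ μ)
    (hAdj : ∀ x s, χ s (A x) = χ (Astar s) x) :
    BMnorm μ χ p₁ p₂ p₃ θ (fun s t => m (Astar s) (Astar t)) ≤ BMnorm μ χ p₁ p₂ p₃ θ m := by
  refine iSup₂_le fun f g => iSup₂_le fun hf hg => iSup₂_le fun hf1 hg1 => ?_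
  rw [smallNorm_Bop_comp_adjoint hA hAdj]
  refine le_iSup₂_of_le (f ∘ A) (g ∘ A) <|
    le_iSup₂_of_le (hf.comp A.continuous) (hg.comp A.continuous) <| le_iSup₂_of_le ?_ ?_ le_rfl
  · rwa [smallNorm_comp_continuousAddEquiv hA]
  · rwa [smallNorm_comp_continuousAddEquiv hA]

end Multiplier

theorem weighted_dilated_symbols_general
    (μ : Measure G) [μ.IsAddHaarMeasure]
    (χ : Γ → G → ℂ)
    (p₁ p₂ p₃ θ : ℝ) (hp₃ : 1 < p₃)
    (A : G ≃+ G) (hA : Continuous A) (hA' : Continuous A.symm)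
    (modA : ℝ)
    (hAmod : ∀ U : Set G, MeasurableSet U → μ (⇑A '' U) = ENNReal.ofReal modA * μ U)
    (Astar : Γ ≃+ Γ) (hAdj : ∀ (x : G) (s : Γ), χ s (A x) = χ (Astar s) x)
    (q : ℝ)
    (m : Γ → Γ → ℂ)
    (hm : BMclass μ χ p₁ p₂ p₃ θ m)
    (Ψ : Γ → ℂ) (hΨ : Summable fun u : Γ => modA ^ (-(1 / q)) * ‖Ψ u‖) :
    BMclass μ χ p₁ p₂ p₃ θ
        (fun s t => ∑' u : Set.range (⇑Astar), m (Astar s) (Astar t) * Ψ u.1) ∧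
    BMnorm μ χ p₁ p₂ p₃ θ
        (fun s t => ∑' u : Set.range (⇑Astar), m (Astar s) (Astar t) * Ψ u.1) ≤
      ENNReal.ofReal (∑' u : Γ, modA ^ (-(1 / q)) * ‖Ψ u‖) *
        BMnorm μ χ p₁ p₂ p₃ θ m := by
  let A' : G ≃ₜ+ G := { A with continuous_toFun := hA, continuous_invFun := hA' }
  have hmod : modA = 1 := eq_one_of_measure_image_eq_mul A.surjective hAmod
  have hA'μ : MeasurePreserving A' μ μ :=
    A'.toHomeomorph.toMeasurableEquiv.measurePreserving_of_measure_image fun U hU =>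
      (hAmod U hU).trans (by rw [hmod, ENNReal.ofReal_one, one_mul])
  have hsymbol : (fun s t => ∑' u : Set.range (⇑Astar), m (Astar s) (Astar t) * Ψ u.1) =
      fun s t => m (Astar s) (Astar t) * ∑' u, Ψ u := by
    funext s t
    rw [tsum_mul_left, tsum_range Ψ Astar.injective]
    exact congrArg _ (Astar.toEquiv.tsum_eq Ψ)
  have hweight : ‖∑' u, Ψ u‖ₑ ≤ ENNReal.ofReal (∑' u : Γ, modA ^ (-(1 / q)) * ‖Ψ u‖) := by
    simp only [hmod, Real.one_rpow, one_mul] at hΨ ⊢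
    rw [← ofReal_norm]
    exact ENNReal.ofReal_le_ofReal (norm_tsum_le_tsum_norm hΨ)
  rw [hsymbol]
  refine ⟨(hm.comp_adjoint hA'μ hAdj).mul_const hp₃ _, ?_⟩
  calc _ ≤ ‖∑' u, Ψ u‖ₑ * BMnorm μ χ p₁ p₂ p₃ θ (fun s t => m (Astar s) (Astar t)) :=
        BMnorm_mul_const_le hp₃ _
    _ ≤ _ := by gcongr; exact BMnorm_comp_adjoint_le hA'μ hAdj

/-- weighted sums of dilated symbols,
`m_Ψ(s,t) = Σ_{u ∈ A*Ĝ} m(A*s, A*t) Ψ(u)` with `Ψ ∈ ℓ¹(Ĝ, |A*|^{-1/q} dμ)`. -/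
theorem weighted_dilated_symbols
    (μ : Measure G) [μ.IsAddHaarMeasure] [IsFiniteMeasure μ]
    (χ : Γ → G → ℂ) (hχ : IsCharFamily χ)
    (p₁ p₂ p₃ θ : ℝ) (hp₁ : 1 < p₁) (hp₂ : 1 < p₂) (hp₃ : 1 < p₃) (hθ : 0 ≤ θ)
    (A : G ≃+ G) (hA : Continuous A) (hA' : Continuous A.symm)
    (modA : ℝ) (hmodA : 0 < modA)
    (hAmod : ∀ U : Set G, MeasurableSet U → μ (⇑A '' U) = ENNReal.ofReal modA * μ U)
    (Astar : Γ ≃+ Γ) (hAdj : ∀ (x : G) (s : Γ), χ s (A x) = χ (Astar s) x)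
    (q : ℝ) (hq : 1 / q = 1 / conjExp p₁ + 1 / conjExp p₂ - 1 / conjExp p₃)
    (m : Γ → Γ → ℂ) (hm_bd : ∃ Cb : ℝ, ∀ s t : Γ, ‖m s t‖ ≤ Cb)
    (hm : BMclass μ χ p₁ p₂ p₃ θ m)
    (Ψ : Γ → ℂ) (hΨ : Summable fun u : Γ => modA ^ (-(1 / q)) * ‖Ψ u‖) :
    BMclass μ χ p₁ p₂ p₃ θ
        (fun s t => ∑' u : Set.range (⇑Astar), m (Astar s) (Astar t) * Ψ u.1) ∧
    BMnorm μ χ p₁ p₂ p₃ θ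
        (fun s t => ∑' u : Set.range (⇑Astar), m (Astar s) (Astar t) * Ψ u.1) ≤
      ENNReal.ofReal (∑' u : Γ, modA ^ (-(1 / q)) * ‖Ψ u‖) *
        BMnorm μ χ p₁ p₂ p₃ θ m :=
  weighted_dilated_symbols_general μ χ p₁ p₂ p₃ θ hp₃ A hA hA' modA hAmod Astar hAdj q m hm Ψ hΨ

end
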